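/- arXiv:2101.08104 — 3 statements merged into one kernel-verified Lean document; each statement's English description precedes it below -/
import Mathlib

section
/- Let (M, T, T') be a structure and depth preserving mapping (SdM) between rooted labeled trees T and T', and let T = T_0, T_1, ..., T_k be a sequence of rooted labeled trees such that each T_{i+1} is obtained from T_i by one of the atomic transformations (relabel a matched vertex, delete an unmatched leaf of T, or insert an unmatched vertex of T' as a child of an already present vertex corresponding to its parent), in such a way that every vertex v of T and every vertex v' of T' has been considered in exactly one transformation. Then T_k is isomorphic to T' (as a rooted labeled tree). -/
open scoped Classical

/-- A rooted labeled tree with vertex set `V` and labels in `σ`, encoded by a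
parent function: every vertex reaches the root by iterating `par`, and the
root is a fixed point of `par`. -/
structure LTree (V : Type) (σ : Type) where
  root : V
  par : V → V
  label : V → σ
  par_root : par root = root
  acyc : ∀ w : V, ∃ k : ℕ, par^[k] w = root

namespace LTree

variable {V V' V'' : Type} {σ : Type}

/-- The depth of a vertex: its distance to the root. -/
noncomputable def depth (T : LTree V σ) (w : V) : ℕ := Nat.find (T.acyc w)

/-- `T.Desc v w` means `w` is a descendant of `v` (or `w = v`), i.e. `w` belongs
to the subtree `T[v]` rooted at `v`. -/
def Desc (T : LTree V σ) (v w : V) : Prop := ∃ k : ℕ, T.par^[k] w = v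

/-- A structure and depth preserving mapping (SdM) between rooted labeled trees. -/
def IsSdM (T : LTree V σ) (T' : LTree V' σ) (M : Finset (V × V')) : Prop :=
  (∀ p ∈ M, ∀ q ∈ M, (p.1 = q.1 ↔ p.2 = q.2)) ∧
  (T.root, T'.root) ∈ M ∧
  (∀ p ∈ M, p.1 ≠ T.root → (T.par p.1, T'.par p.2) ∈ M)

/-- An isomorphism of rooted labeled trees: a bijection of the vertex sets
preserving the root, the parent relation (hence all edges), and all labels. -/
structure Iso (T : LTree V σ) (T' : LTree V' σ) where
  e : V ≃ V'
  root_eq : e T.root = T'.root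
  par_eq : ∀ w, e (T.par w) = T'.par (e w)
  label_eq : ∀ w, T'.label (e w) = T.label w

/-- `γ` is a metric on `Σ ∪ {⊥}` (where `⊥` is encoded by `none`). -/
def IsMetricCost (γ : Option σ → Option σ → ℝ) : Prop :=
  (∀ a b, γ a b = 0 ↔ a = b) ∧ (∀ a b, γ a b = γ b a) ∧
  (∀ a b c, γ a c ≤ γ a b + γ b c)

/-- The cost `γ(M)` of a mapping `M`: relabeling costs for matched pairs plus
deletion costs for unmatched vertices of `T` plus insertion costs for
unmatched vertices of `T'`. -/
noncomputable def cost [Fintype V] [Fintype V'] (γ : Option σ → Option σ → ℝ)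
    (T : LTree V σ) (T' : LTree V' σ) (M : Finset (V × V')) : ℝ :=
  (∑ p ∈ M, γ (some (T.label p.1)) (some (T'.label p.2)))
  + (∑ w ∈ Finset.univ.filter (fun w : V => ∀ p ∈ M, p.1 ≠ w),
      γ (some (T.label w)) none)
  + (∑ w' ∈ Finset.univ.filter (fun w' : V' => ∀ p ∈ M, p.2 ≠ w'),
      γ none (some (T'.label w')))

/-- The structure and depth preserving tree edit distance: the minimum cost
of a structure and depth preserving mapping between `T` and `T'`. -/
noncomputable def SdTed [Fintype V] [Fintype V'] (γ : Option σ → Option σ → ℝ)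
    (T : LTree V σ) (T' : LTree V' σ) : ℝ :=
  sInf {c : ℝ | ∃ M : Finset (V × V'), IsSdM T T' M ∧ cost γ T T' M = c}

theorem Desc.par {T : LTree V σ} {v w : V} (h : T.Desc v w) (hw : w ≠ v) :
    T.Desc v (T.par w) := by
  obtain ⟨k, hk⟩ := h
  cases k with
  | zero => exact absurd hk hw
  | succ k => exact ⟨k, by rwa [Function.iterate_succ_apply] at hk⟩

/-- The parent function of the subtree `T[v]`. -/
noncomputable def subPar (T : LTree V σ) (v : V) (w : {w : V // T.Desc v w}) :
    {w : V // T.Desc v w} :=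
  if h : (w : V) = v then ⟨v, 0, rfl⟩ else ⟨T.par w, w.2.par h⟩

/-- The subtree `T[v]` of `T` rooted at `v`, induced by `v` and all its
descendants. -/
noncomputable def sub (T : LTree V σ) (v : V) : LTree {w : V // T.Desc v w} σ where
  root := ⟨v, 0, rfl⟩
  par := subPar T v
  label := fun w => T.label w
  par_root := dif_pos rfl
  acyc := by
    have key : ∀ (k : ℕ) (w : {w : V // T.Desc v w}), T.par^[k] (w : V) = v →
        (subPar T v)^[k] w = ⟨v, 0, rfl⟩ := by
      intro k
      induction k with
      | zero => intro w hw; exact Subtype.ext hw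
      | succ k ih =>
        intro w hw
        by_cases hv : (w : V) = v
        · rw [Function.iterate_succ_apply]
          have : subPar T v w = ⟨v, 0, rfl⟩ := dif_pos hv
          rw [this]
          have hfix : subPar T v ⟨v, 0, rfl⟩ = ⟨v, 0, rfl⟩ := dif_pos rfl
          exact Function.iterate_fixed hfix k
        · rw [Function.iterate_succ_apply]
          have : subPar T v w = ⟨T.par w, w.2.par hv⟩ := dif_neg hv
          rw [this]
          exact ih _ (by rwa [Function.iterate_succ_apply] at hw)
    intro w
    obtain ⟨k, hk⟩ := w.2
    exact ⟨k, key k w hk⟩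

end LTree

open LTree

/-- The bookkeeping state of an edit script transforming `T` into `T'` along
an SdM `M`: the set of (unmatched) vertices of `T` deleted so far, the set of
(unmatched) vertices of `T'` inserted so far, and the set of matched pairs
relabeled so far. The intermediate tree `Tᵢ` determined by such a state has
as vertices the non-deleted vertices of `T` together with the inserted
vertices of `T'`. -/
structure EditState (V V' : Type) where
  del : Finset V
  ins : Finset V'
  rel : Finset (V × V')

/-- The vertices of the intermediate tree determined by a state: a vertex of
`T` is present iff it has not been deleted, and a vertex of `T'` is present
iff it has been inserted. -/
def activeIn {V V' : Type} (s : EditState V V') : V ⊕ V' → Prop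
  | .inl v => v ∉ s.del
  | .inr v' => v' ∈ s.ins

/-- The parent function of the intermediate tree: a (non-deleted) vertex of
`T` keeps its parent in `T`; an inserted vertex `v'` of `T'` is attached to
the vertex corresponding to its parent in `T'`, namely the `M`-partner `u` of
`par(v')` if `par(v')` is matched, and `par(v')` itself otherwise. -/
noncomputable def midPar {σ : Type} {V V' : Type} (T : LTree V σ) (T' : LTree V' σ)
    (M : Finset (V × V')) : V ⊕ V' → V ⊕ V'
  | .inl v => .inl (T.par v)
  | .inr v' =>
      if h : ∃ u : V, (u, T'.par v') ∈ M then .inl h.choose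
      else .inr (T'.par v')

/-- The labels of the intermediate tree: a vertex of `T` that has been
relabeled carries the label of its partner in `T'`, any other vertex of `T`
keeps its label, and an inserted vertex of `T'` carries its label in `T'`. -/
noncomputable def midLab {σ : Type} {V V' : Type} (T : LTree V σ) (T' : LTree V' σ)
    (s : EditState V V') : V ⊕ V' → σ
  | .inl v =>
      if h : ∃ v' : V', (v, v') ∈ s.rel then T'.label h.choose
      else T.label v
  | .inr v' => T'.label v'

/-- The atomic transformations associated with an SdM `(M, T, T')`, acting on
edit states: relabel a matched (not yet relabeled) vertex; delete an
unmatched (not yet deleted) vertex of `T` that is a leaf of the intermediate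
tree; insert an unmatched (not yet inserted) vertex of `T'` whose
corresponding parent already exists in the intermediate tree. -/
inductive Step {σ : Type} {V V' : Type} (T : LTree V σ) (T' : LTree V' σ)
    (M : Finset (V × V')) : EditState V V' → EditState V V' → Prop
  | relabel (s : EditState V V') (p : V × V') (hp : p ∈ M) (hnew : p ∉ s.rel) :
      Step T T' M s ⟨s.del, s.ins, insert p s.rel⟩
  | delete (s : EditState V V') (v : V)
      (hunm : ¬ ∃ v' : V', (v, v') ∈ M) (hnew : v ∉ s.del)
      (hleaf : ∀ x : V ⊕ V', activeIn s x → midPar T T' M x = Sum.inl v →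
        x = Sum.inl v) :
      Step T T' M s ⟨insert v s.del, s.ins, s.rel⟩
  | insert (s : EditState V V') (v' : V')
      (hunm : ¬ ∃ u : V, (u, v') ∈ M) (hnew : v' ∉ s.ins)
      (hpar : activeIn s (midPar T T' M (Sum.inr v'))) :
      Step T T' M s ⟨s.del, insert v' s.ins, s.rel⟩

/-- Let `(M, T, T')` be a structure and depth preserving
mapping and let `T = T₀, T₁, …, T_k` be a sequence of trees (encoded by their
edit states `s 0, …, s k`, starting from the empty state) such that each
`T_{i+1}` is obtained from `T_i` by an atomic transformation, in such a way
that every vertex of `T` and every vertex of `T'` has been considered in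
exactly one transformation (every matched pair has been relabeled, every
unmatched vertex of `T` deleted, and every unmatched vertex of `T'`
inserted). Then `T_k` is isomorphic to `T'` as a rooted labeled tree: there
is a bijection `e` from the vertices of `T_k` onto the vertices of `T'`
mapping the root to the root and preserving parents and labels. -/
theorem edit_script_correct {σ : Type} {V V' : Type}
    (T : LTree V σ) (T' : LTree V' σ) (M : Finset (V × V'))
    (hM : IsSdM T T' M) (k : ℕ) (s : ℕ → EditState V V')
    (h0 : s 0 = ⟨∅, ∅, ∅⟩)
    (hstep : ∀ i < k, Step T T' M (s i) (s (i + 1)))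
    (hrel : (s k).rel = M)
    (hdel : ∀ v : V, (¬ ∃ v' : V', (v, v') ∈ M) → v ∈ (s k).del)
    (hins : ∀ v' : V', (¬ ∃ u : V, (u, v') ∈ M) → v' ∈ (s k).ins) :
    activeIn (s k) (Sum.inl T.root) ∧
    ∃ e : V ⊕ V' → V',
      (∀ w' : V', ∃! x : V ⊕ V', activeIn (s k) x ∧ e x = w') ∧
      e (Sum.inl T.root) = T'.root ∧
      (∀ x : V ⊕ V', activeIn (s k) x → T'.label (e x) = midLab T T' (s k) x) ∧
      (∀ x : V ⊕ V', activeIn (s k) x →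
        e (midPar T T' M x) = T'.par (e x)) := by
  classical
  obtain ⟨hdef, hroot, hstruct⟩ := hM
  -- uniqueness of partners
  have huniq : ∀ {v : V} {v' w' : V'}, (v, v') ∈ M → (v, w') ∈ M → v' = w' := by
    intro v v' w' h1 h2
    exact (hdef (v, v') h1 (v, w') h2).mp rfl
  have huniq2 : ∀ {v w : V} {v' : V'}, (v, v') ∈ M → (w, v') ∈ M → v = w := by
    intro v w v' h1 h2
    exact (hdef (v, v') h1 (w, v') h2).mpr rfl
  -- invariant: deleted vertices are unmatched, inserted vertices are unmatched
  have step_inv : ∀ a b : EditState V V', Step T T' M a b →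
      (∀ v ∈ a.del, ¬ ∃ v' : V', (v, v') ∈ M) →
      (∀ v' ∈ a.ins, ¬ ∃ u : V, (u, v') ∈ M) →
      (∀ v ∈ b.del, ¬ ∃ v' : V', (v, v') ∈ M) ∧
      (∀ v' ∈ b.ins, ¬ ∃ u : V, (u, v') ∈ M) := by
    intro a b hst hd hi
    cases hst with
    | relabel p hp hnew => exact ⟨hd, hi⟩
    | delete v hunm hnew hleaf =>
      refine ⟨?_, hi⟩
      intro w hw
      rcases Finset.mem_insert.mp hw with h | h
      · subst h; exact hunm
      · exact hd w h
    | insert v' hunm hnew hpar =>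
      refine ⟨hd, ?_⟩
      intro w hw
      rcases Finset.mem_insert.mp hw with h | h
      · subst h; exact hunm
      · exact hi w h
  have hinv : ∀ i ≤ k,
      (∀ v ∈ (s i).del, ¬ ∃ v' : V', (v, v') ∈ M) ∧
      (∀ v' ∈ (s i).ins, ¬ ∃ u : V, (u, v') ∈ M) := by
    intro i
    induction i with
    | zero => intro _; rw [h0]; simp
    | succ n ih =>
      intro hn
      obtain ⟨hd, hi⟩ := ih (Nat.le_of_succ_le hn)
      exact step_inv (s n) (s (n + 1)) (hstep n hn) hd hi
  obtain ⟨hdelk, hinsk⟩ := hinv k le_rfl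
  -- characterization of active vertices at stage k
  have hactL : ∀ v : V, activeIn (s k) (Sum.inl v) ↔ ∃ v' : V', (v, v') ∈ M := by
    intro v
    constructor
    · intro hv
      by_contra hun
      exact hv (hdel v hun)
    · intro hm hv
      exact hdelk v hv hm
  have hactR : ∀ v' : V', activeIn (s k) (Sum.inr v') ↔ ¬ ∃ u : V, (u, v') ∈ M := by
    intro v'
    constructor
    · intro hv
      exact hinsk v' hv
    · intro hun
      exact hins v' hun
  refine ⟨(hactL T.root).mpr ⟨T'.root, hroot⟩, ?_⟩
  -- the bijection
  refine ⟨fun x => match x with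
    | Sum.inl v => if h : ∃ v' : V', (v, v') ∈ M then h.choose else T'.root
    | Sum.inr v' => v', ?_, ?_, ?_, ?_⟩
  · -- bijectivity
    intro w'
    by_cases hw' : ∃ u : V, (u, w') ∈ M
    · obtain ⟨u, hu⟩ := hw'
      refine ⟨Sum.inl u, ⟨(hactL u).mpr ⟨w', hu⟩, ?_⟩, ?_⟩
      · simp only
        rw [dif_pos ⟨w', hu⟩]
        exact huniq (⟨w', hu⟩ : ∃ v' : V', (u, v') ∈ M).choose_spec hu
      · rintro (v | z) ⟨hact, he⟩
        · have hm := (hactL v).mp hact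
          simp only at he
          rw [dif_pos hm] at he
          have := hm.choose_spec
          rw [he] at this
          exact congrArg Sum.inl (huniq2 this hu)
        · simp only at he
          subst he
          exact absurd ⟨u, hu⟩ ((hactR z).mp hact)
    · refine ⟨Sum.inr w', ⟨(hactR w').mpr hw', rfl⟩, ?_⟩
      rintro (v | z) ⟨hact, he⟩
      · have hm := (hactL v).mp hact
        simp only at he
        rw [dif_pos hm] at he
        have := hm.choose_spec
        rw [he] at this
        exact absurd ⟨v, this⟩ hw'
      · simp only at he
        rw [he]
  · -- root
    simp only
    rw [dif_pos ⟨T'.root, hroot⟩]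
    exact huniq (⟨T'.root, hroot⟩ : ∃ v' : V', (T.root, v') ∈ M).choose_spec hroot
  · -- labels
    rintro (v | v') hact
    · have hm := (hactL v).mp hact
      simp only [midLab]
      rw [hrel]
      rw [dif_pos hm, dif_pos hm]
    · simp only [midLab]
  · -- parents
    rintro (v | v') hact
    · have hm := (hactL v).mp hact
      simp only [midPar]
      rw [dif_pos hm]
      have hv : (v, hm.choose) ∈ M := hm.choose_spec
      by_cases hvr : v = T.root
      · subst hvr
        have h1 : hm.choose = T'.root := huniq hv hroot
        rw [h1, T.par_root, T'.par_root]
        rw [dif_pos ⟨T'.root, hroot⟩]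
        exact huniq (⟨T'.root, hroot⟩ : ∃ v' : V', (T.root, v') ∈ M).choose_spec hroot
      · have hp : (T.par v, T'.par hm.choose) ∈ M := hstruct (v, hm.choose) hv hvr
        rw [dif_pos ⟨T'.par hm.choose, hp⟩]
        exact huniq (⟨T'.par hm.choose, hp⟩ :
          ∃ w' : V', (T.par v, w') ∈ M).choose_spec hp
    · simp only [midPar]
      by_cases h : ∃ u : V, (u, T'.par v') ∈ M
      · rw [dif_pos h]
        simp only
        have hc : (h.choose, T'.par v') ∈ M := h.choose_spec
        rw [dif_pos ⟨T'.par v', hc⟩]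
        exact huniq (⟨T'.par v', hc⟩ :
          ∃ w' : V', (h.choose, w') ∈ M).choose_spec hc
      · rw [dif_neg h]
end

section
/- For all rooted labeled trees T and T' over label alphabet Σ and every metric cost function γ : Σ^⊥ × Σ^⊥ → ℝ, the structure and depth preserving tree edit distance satisfies the recursion SdTed(T, T') = γ(ℓ(r(T)), ℓ(r(T'))) + min_S Σ_{(T_i, T_j') ∈ S} δ_{ij}, where the minimum is over all perfect bipartite matchings S between the set F of child subtrees of r(T) padded with empty trees T_⊥ and the set F' of child subtrees of r(T') padded with empty trees T_⊥ (so that |F| = |F'| = deg(r(T)) + deg(r(T'))), and where δ_{ij} = SdTed(T_i, T_j') if both T_i and T_j' are nonempty, δ_{ij} = Σ_{v ∈ V(T_i)} γ(ℓ(v), ⊥) if T_j' is empty and T_i is not, δ_{ij} = Σ_{v' ∈ V(T_j')} γ(⊥, ℓ(v')) if T_i is empty and T_j' is not, and δ_{ij} = 0 if both are empty. Equivalently, Algorithm 1 (Compute SdTed) returns SdTed(T, T'). -/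
open scoped Classical

namespace LTree

variable {V V' : Type} {σ : Type}

/-- The children of the root of `T`. -/
noncomputable def childs [Fintype V] (T : LTree V σ) : Finset V :=
  Finset.univ.filter (fun u => T.par u = T.root ∧ u ≠ T.root)

/-- The cost of deleting the whole subtree `T[v]`:
`∑_{w ∈ V(T[v])} γ(ℓ(w), ⊥)`. -/
noncomputable def delCost [Fintype V] (γ : Option σ → Option σ → ℝ)
    (T : LTree V σ) (v : V) : ℝ :=
  ∑ w ∈ Finset.univ.filter (fun w => T.Desc v w), γ (some (T.label w)) none

/-- The cost of inserting the whole subtree `T'[v']`: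
`∑_{w' ∈ V(T'[v'])} γ(⊥, ℓ(w'))`. -/
noncomputable def insCost [Fintype V'] (γ : Option σ → Option σ → ℝ)
    (T' : LTree V' σ) (v' : V') : ℝ :=
  ∑ w' ∈ Finset.univ.filter (fun w' => T'.Desc v' w'), γ none (some (T'.label w'))

end LTree

namespace LTree

variable {V V' : Type} {σ : Type}

theorem par_iterate_root (T : LTree V σ) (k : ℕ) : T.par^[k] T.root = T.root :=
  Function.iterate_fixed T.par_root k

theorem par_iterate_depth (T : LTree V σ) (w : V) : T.par^[T.depth w] w = T.root :=
  Nat.find_spec (T.acyc w)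

theorem depth_le (T : LTree V σ) {w : V} {k : ℕ} (h : T.par^[k] w = T.root) :
    T.depth w ≤ k := Nat.find_le h

theorem depth_root (T : LTree V σ) : T.depth T.root = 0 :=
  Nat.le_zero.mp (T.depth_le (T.par_iterate_root 0))

theorem eq_root_of_depth_zero {T : LTree V σ} {w : V} (h : T.depth w = 0) :
    w = T.root := by
  have := T.par_iterate_depth w
  rwa [h, Function.iterate_zero_apply] at this

theorem depth_pos {T : LTree V σ} {w : V} (h : w ≠ T.root) : 0 < T.depth w := by
  rcases Nat.eq_zero_or_pos (T.depth w) with h0 | h0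
  · exact absurd (eq_root_of_depth_zero h0) h
  · exact h0

theorem par_iterate_of_depth_le (T : LTree V σ) {w : V} {k : ℕ} (h : T.depth w ≤ k) :
    T.par^[k] w = T.root := by
  obtain ⟨m, rfl⟩ := Nat.exists_eq_add_of_le h
  rw [Nat.add_comm, Function.iterate_add_apply, T.par_iterate_depth, T.par_iterate_root]

theorem depth_par {T : LTree V σ} {w : V} (h : w ≠ T.root) :
    T.depth (T.par w) + 1 = T.depth w := by
  have h1 : 0 < T.depth w := depth_pos h
  have le1 : T.depth w ≤ T.depth (T.par w) + 1 := by
    apply T.depth_le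
    rw [Function.iterate_succ_apply]
    exact T.par_iterate_depth (T.par w)
  have le2 : T.depth (T.par w) ≤ T.depth w - 1 := by
    apply T.depth_le
    rw [← Function.iterate_succ_apply, Nat.succ_eq_add_one, Nat.sub_add_cancel h1]
    exact T.par_iterate_depth w
  omega

theorem depth_of_iterate {T : LTree V σ} {v w : V} {k : ℕ} (h : T.par^[k] w = v)
    (hv : v ≠ T.root) : T.depth w = k + T.depth v := by
  have le1 : T.depth w ≤ T.depth v + k := by
    apply T.depth_le
    rw [Function.iterate_add_apply, h]
    exact T.par_iterate_depth v
  have hk : k < T.depth w := by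
    by_contra hc
    push_neg at hc
    exact hv (h ▸ T.par_iterate_of_depth_le hc)
  have le2 : T.depth v ≤ T.depth w - k := by
    apply T.depth_le
    rw [← h, ← Function.iterate_add_apply, Nat.sub_add_cancel hk.le]
    exact T.par_iterate_depth w
  omega

/-- The depth-one ancestor of a vertex. -/
noncomputable def anc (T : LTree V σ) (w : V) : V := T.par^[T.depth w - 1] w

theorem mem_childs_iff [Fintype V] {T : LTree V σ} {u : V} :
    u ∈ T.childs ↔ T.par u = T.root ∧ u ≠ T.root := by
  simp [childs]

theorem mem_childs_iff_depth [Fintype V] {T : LTree V σ} {u : V} :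
    u ∈ T.childs ↔ T.depth u = 1 := by
  rw [mem_childs_iff]
  constructor
  · rintro ⟨h1, h2⟩
    have := depth_par h2
    rw [h1, depth_root] at this
    omega
  · intro h
    have hu : u ≠ T.root := by
      intro e; rw [e, depth_root] at h; omega
    have := depth_par hu
    rw [h] at this
    exact ⟨eq_root_of_depth_zero (by omega), hu⟩

theorem anc_spec {T : LTree V σ} {w : V} (h : w ≠ T.root) :
    T.par (T.anc w) = T.root ∧ T.anc w ≠ T.root := by
  have h1 : 0 < T.depth w := depth_pos h
  constructor
  · have : T.par (T.anc w) = T.par^[T.depth w - 1 + 1] w := by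
      rw [Function.iterate_succ_apply']; rfl
    rw [this, Nat.sub_add_cancel h1]
    exact T.par_iterate_depth w
  · intro e
    have := T.depth_le (e : T.par^[T.depth w - 1] w = T.root)
    omega

theorem anc_mem_childs [Fintype V] {T : LTree V σ} {w : V} (h : w ≠ T.root) :
    T.anc w ∈ T.childs := mem_childs_iff.mpr (anc_spec h)

theorem desc_self (T : LTree V σ) (v : V) : T.Desc v v := ⟨0, rfl⟩

theorem desc_anc {T : LTree V σ} {w : V} (_h : w ≠ T.root) : T.Desc (T.anc w) w :=
  ⟨T.depth w - 1, rfl⟩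

theorem desc_child_iff [Fintype V] {T : LTree V σ} {u w : V} (hu : u ∈ T.childs) :
    T.Desc u w ↔ w ≠ T.root ∧ T.anc w = u := by
  obtain ⟨hpu, hune⟩ := mem_childs_iff.mp hu
  have hdu : T.depth u = 1 := mem_childs_iff_depth.mp hu
  constructor
  · rintro ⟨k, hk⟩
    have hw : w ≠ T.root := by
      rintro rfl
      exact hune (by rw [← hk, T.par_iterate_root])
    refine ⟨hw, ?_⟩
    have hd : T.depth w = k + 1 := by rw [depth_of_iterate hk hune, hdu]
    show T.par^[T.depth w - 1] w = u
    rw [hd]; simpa using hk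
  · rintro ⟨hw, rfl⟩
    exact desc_anc hw

theorem desc_ne_root [Fintype V] {T : LTree V σ} {u w : V} (hu : u ∈ T.childs)
    (h : T.Desc u w) : w ≠ T.root := ((desc_child_iff hu).mp h).1

theorem desc_child_eq_anc [Fintype V] {T : LTree V σ} {u w : V} (hu : u ∈ T.childs)
    (h : T.Desc u w) : T.anc w = u := ((desc_child_iff hu).mp h).2

theorem child_desc_unique [Fintype V] {T : LTree V σ} {u u' w : V} (hu : u ∈ T.childs)
    (hu' : u' ∈ T.childs) (h : T.Desc u w) (h' : T.Desc u' w) : u = u' := by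
  rw [← desc_child_eq_anc hu h, desc_child_eq_anc hu' h']

theorem anc_child [Fintype V] {T : LTree V σ} {u : V} (hu : u ∈ T.childs) :
    T.anc u = u :=
  desc_child_eq_anc hu (T.desc_self u)

theorem anc_par {T : LTree V σ} {w : V} (h : 2 ≤ T.depth w) :
    T.anc (T.par w) = T.anc w := by
  have hw : w ≠ T.root := by
    intro e; rw [e, depth_root] at h; omega
  have hd : T.depth (T.par w) + 1 = T.depth w := depth_par hw
  show T.par^[T.depth (T.par w) - 1] (T.par w) = T.par^[T.depth w - 1] w
  rw [← Function.iterate_succ_apply]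
  congr 1
  omega

end LTree

namespace LTree

variable {V V' : Type} {σ : Type}

theorem IsSdM.depth_eq {T : LTree V σ} {T' : LTree V' σ} {M : Finset (V × V')}
    (hM : IsSdM T T' M) : ∀ p ∈ M, T'.depth p.2 = T.depth p.1 := by
  obtain ⟨hdef, hroot, hpar⟩ := hM
  suffices key : ∀ n p, p ∈ M → T.depth p.1 = n → T'.depth p.2 = n by
    intro p hp; exact key _ p hp rfl
  intro n
  induction n with
  | zero =>
    intro p hp h0
    have h1 : p.1 = T.root := eq_root_of_depth_zero h0
    have h2 : p.2 = T'.root := (hdef p hp _ hroot).mp h1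
    rw [h2, depth_root]
  | succ n ih =>
    intro p hp h
    have h1 : p.1 ≠ T.root := by
      intro e; rw [e, depth_root] at h; omega
    have hpp := hpar p hp h1
    have h2 : p.2 ≠ T'.root := by
      intro e
      exact h1 ((hdef p hp _ hroot).mpr e)
    have hd1 : T.depth (T.par p.1) = n := by
      have := depth_par h1; omega
    have h3 : T'.depth (T'.par p.2) = n := ih (T.par p.1, T'.par p.2) hpp hd1
    have h4 := depth_par h2
    omega

theorem IsSdM.snd_ne_root {T : LTree V σ} {T' : LTree V' σ} {M : Finset (V × V')}
    (hM : IsSdM T T' M) {p : V × V'} (hp : p ∈ M) (h1 : p.1 ≠ T.root) :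
    p.2 ≠ T'.root := fun e => h1 ((hM.1 p hp _ hM.2.1).mpr e)

theorem IsSdM.fst_ne_root {T : LTree V σ} {T' : LTree V' σ} {M : Finset (V × V')}
    (hM : IsSdM T T' M) {p : V × V'} (hp : p ∈ M) (h2 : p.2 ≠ T'.root) :
    p.1 ≠ T.root := fun e => h2 ((hM.1 p hp _ hM.2.1).mp e)

theorem IsSdM.anc_mem {T : LTree V σ} {T' : LTree V' σ} {M : Finset (V × V')}
    (hM : IsSdM T T' M) : ∀ p ∈ M, p.1 ≠ T.root → (T.anc p.1, T'.anc p.2) ∈ M := by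
  suffices key : ∀ n p, p ∈ M → p.1 ≠ T.root → T.depth p.1 = n →
      (T.anc p.1, T'.anc p.2) ∈ M by
    intro p hp h1; exact key _ p hp h1 rfl
  intro n
  induction n with
  | zero => intro p hp h1 h0; exact absurd (eq_root_of_depth_zero h0) h1
  | succ n ih =>
    intro p hp h1 h
    have h2 : p.2 ≠ T'.root := hM.snd_ne_root hp h1
    have hd2 : T'.depth p.2 = n + 1 := by rw [hM.depth_eq p hp, h]
    rcases Nat.eq_zero_or_pos n with rfl | hn
    · -- depth 1 : anc p.1 = p.1, anc p.2 = p.2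
      have e1 : T.anc p.1 = p.1 := by
        show T.par^[T.depth p.1 - 1] p.1 = p.1
        rw [h]; simp
      have e2 : T'.anc p.2 = p.2 := by
        show T'.par^[T'.depth p.2 - 1] p.2 = p.2
        rw [hd2]; simp
      rw [e1, e2]; exact hp
    · have hpp := hM.2.2 p hp h1
      have hd1 : T.depth (T.par p.1) = n := by have := depth_par h1; omega
      have hne : T.par p.1 ≠ T.root := by
        intro e; rw [e, depth_root] at hd1; omega
      have := ih (T.par p.1, T'.par p.2) hpp hne hd1
      rwa [anc_par (by omega : 2 ≤ T.depth p.1),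
        anc_par (by omega : 2 ≤ T'.depth p.2)] at this

end LTree

namespace LTree

variable {V V' : Type} {σ : Type}

theorem sum_classify [Fintype V] (T : LTree V σ) {ι : Type} (s : Finset ι)
    (π : ι → V) (f : ι → ℝ) :
    ∑ i ∈ s, f i = (∑ i ∈ s.filter (fun i => π i = T.root), f i)
      + ∑ u ∈ T.childs, ∑ i ∈ s.filter (fun i => T.Desc u (π i)), f i := by
  classical
  set g : ι → V := fun i => if π i = T.root then T.root else T.anc (π i) with hg
  have hmaps : ∀ i ∈ s, g i ∈ insert T.root T.childs := by
    intro i _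
    by_cases h : π i = T.root
    · simp [hg, h]
    · simp only [hg, if_neg h]
      exact Finset.mem_insert_of_mem (anc_mem_childs h)
  have hroot_not : T.root ∉ T.childs := by
    intro h; exact (mem_childs_iff.mp h).2 rfl
  rw [← Finset.sum_fiberwise_of_maps_to hmaps f, Finset.sum_insert hroot_not]
  congr 1
  · apply Finset.sum_congr _ (fun _ _ => rfl)
    apply Finset.filter_congr
    intro i _
    by_cases h : π i = T.root
    · simp [hg, h]
    · simp only [hg, if_neg h, h, iff_false]
      exact (mem_childs_iff.mp (anc_mem_childs h)).2
  · apply Finset.sum_congr rfl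
    intro u hu
    apply Finset.sum_congr _ (fun _ _ => rfl)
    apply Finset.filter_congr
    intro i _
    by_cases h : π i = T.root
    · simp only [hg, if_pos h]
      constructor
      · intro e; exact absurd (e ▸ hu) hroot_not
      · intro hd; exact absurd (h ▸ hd) (fun hh => desc_ne_root hu hh rfl)
    · simp only [hg, if_neg h]
      rw [desc_child_iff hu]
      simp [h]

end LTree

namespace LTree

variable {V V' : Type} {σ : Type}

/-- The pairs of an SdM matching children of the roots. -/
noncomputable def childPairs [Fintype V] [Fintype V'] (T : LTree V σ) (T' : LTree V' σ)
    (M : Finset (V × V')) : Finset (V × V') :=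
  M.filter (fun p => p.1 ∈ T.childs ∧ p.2 ∈ T'.childs)

/-- The restriction of a mapping to the subtrees rooted at `u` and `u'`. -/
noncomputable def subM [Fintype V] [Fintype V'] (T : LTree V σ) (T' : LTree V' σ)
    (M : Finset (V × V')) (u : V) (u' : V') :
    Finset ({w : V // T.Desc u w} × {w' : V' // T'.Desc u' w'}) :=
  Finset.univ.filter (fun q => ((q.1 : V), (q.2 : V')) ∈ M)

theorem mem_subM [Fintype V] [Fintype V'] {T : LTree V σ} {T' : LTree V' σ}
    {M : Finset (V × V')} {u : V} {u' : V'}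
    {q : {w : V // T.Desc u w} × {w' : V' // T'.Desc u' w'}} :
    q ∈ subM T T' M u u' ↔ ((q.1 : V), (q.2 : V')) ∈ M := by
  simp [subM]

variable [Fintype V] [Fintype V'] {T : LTree V σ} {T' : LTree V' σ}
  {M : Finset (V × V')}

theorem IsSdM.childPairs_mem_of_mem (hM : IsSdM T T' M) {p : V × V'} (hp : p ∈ M)
    (h1 : p.1 ∈ T.childs) : p ∈ childPairs T T' M := by
  refine Finset.mem_filter.mpr ⟨hp, h1, ?_⟩
  rw [mem_childs_iff_depth, hM.depth_eq p hp, ← mem_childs_iff_depth]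
  exact h1

theorem IsSdM.childPairs_mem_of_mem' (hM : IsSdM T T' M) {p : V × V'} (hp : p ∈ M)
    (h2 : p.2 ∈ T'.childs) : p ∈ childPairs T T' M := by
  refine Finset.mem_filter.mpr ⟨hp, ?_, h2⟩
  rw [mem_childs_iff_depth, ← hM.depth_eq p hp, ← mem_childs_iff_depth]
  exact h2

/-- L1: the only pair of an SdM whose first coordinate is the root is the root pair. -/
theorem IsSdM.filter_fst_root (hM : IsSdM T T' M) :
    M.filter (fun p => p.1 = T.root) = {(T.root, T'.root)} := by
  ext p
  simp only [Finset.mem_filter, Finset.mem_singleton]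
  constructor
  · rintro ⟨hp, h1⟩
    have h2 : p.2 = T'.root := (hM.1 p hp _ hM.2.1).mp h1
    exact Prod.ext h1 h2
  · rintro rfl
    exact ⟨hM.2.1, rfl⟩

/-- L2: coherence between subtrees of matched children. -/
theorem IsSdM.desc_snd (hM : IsSdM T T' M) {p₀ : V × V'}
    (hp₀ : p₀ ∈ childPairs T T' M) {p : V × V'} (hp : p ∈ M)
    (hd : T.Desc p₀.1 p.1) : T'.Desc p₀.2 p.2 := by
  obtain ⟨hp₀M, hc1, hc2⟩ := Finset.mem_filter.mp hp₀
  have h1 : p.1 ≠ T.root := desc_ne_root hc1 hd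
  have h2 : p.2 ≠ T'.root := hM.snd_ne_root hp h1
  have hanc := hM.anc_mem p hp h1
  have e1 : T.anc p.1 = p₀.1 := desc_child_eq_anc hc1 hd
  have e2 : T'.anc p.2 = p₀.2 := by
    have := (hM.1 _ hanc _ hp₀M).mp (by simpa using e1)
    simpa using this
  rw [← e2]
  exact desc_anc h2

theorem IsSdM.desc_fst (hM : IsSdM T T' M) {p₀ : V × V'}
    (hp₀ : p₀ ∈ childPairs T T' M) {p : V × V'} (hp : p ∈ M)
    (hd : T'.Desc p₀.2 p.2) : T.Desc p₀.1 p.1 := by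
  obtain ⟨hp₀M, hc1, hc2⟩ := Finset.mem_filter.mp hp₀
  have h2 : p.2 ≠ T'.root := desc_ne_root hc2 hd
  have h1 : p.1 ≠ T.root := hM.fst_ne_root hp h2
  have hanc := hM.anc_mem p hp h1
  have e2 : T'.anc p.2 = p₀.2 := desc_child_eq_anc hc2 hd
  have e1 : T.anc p.1 = p₀.1 := by
    have := (hM.1 _ hanc _ hp₀M).mpr (by simpa using e2)
    simpa using this
  rw [← e1]
  exact desc_anc h1

/-- L4: if a child is unmatched, no vertex of its subtree is matched. -/
theorem IsSdM.filter_desc_empty (hM : IsSdM T T' M) {u : V} (hu : u ∈ T.childs)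
    (hun : ∀ p ∈ childPairs T T' M, p.1 ≠ u) :
    M.filter (fun p => T.Desc u p.1) = ∅ := by
  rw [Finset.filter_eq_empty_iff]
  rintro p hp hd
  have h1 : p.1 ≠ T.root := desc_ne_root hu hd
  have hanc := hM.anc_mem p hp h1
  have e1 : T.anc p.1 = u := desc_child_eq_anc hu hd
  have hc : (T.anc p.1, T'.anc p.2) ∈ childPairs T T' M :=
    hM.childPairs_mem_of_mem hanc (e1 ▸ hu)
  exact hun _ hc (by simpa using e1)

theorem IsSdM.filter_desc_empty' (hM : IsSdM T T' M) {u' : V'} (hu' : u' ∈ T'.childs)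
    (hun : ∀ p ∈ childPairs T T' M, p.2 ≠ u') :
    M.filter (fun p => T'.Desc u' p.2) = ∅ := by
  rw [Finset.filter_eq_empty_iff]
  rintro p hp hd
  have h2 : p.2 ≠ T'.root := desc_ne_root hu' hd
  have h1 : p.1 ≠ T.root := hM.fst_ne_root hp h2
  have hanc := hM.anc_mem p hp h1
  have e2 : T'.anc p.2 = u' := desc_child_eq_anc hu' hd
  have hc : (T.anc p.1, T'.anc p.2) ∈ childPairs T T' M :=
    hM.childPairs_mem_of_mem' hanc (e2 ▸ hu')
  exact hun _ hc (by simpa using e2)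

/-- L3: the restriction of an SdM to matched child subtrees is an SdM. -/
theorem IsSdM.subM_isSdM (hM : IsSdM T T' M) {p₀ : V × V'}
    (hp₀ : p₀ ∈ childPairs T T' M) :
    IsSdM (T.sub p₀.1) (T'.sub p₀.2) (subM T T' M p₀.1 p₀.2) := by
  obtain ⟨hp₀M, hc1, hc2⟩ := Finset.mem_filter.mp hp₀
  refine ⟨?_, ?_, ?_⟩
  · intro q hq r hr
    rw [mem_subM] at hq hr
    have := hM.1 _ hq _ hr
    simp only at this
    constructor
    · intro e; exact Subtype.ext (this.mp (congrArg Subtype.val e))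
    · intro e; exact Subtype.ext (this.mpr (congrArg Subtype.val e))
  · rw [mem_subM]
    exact hp₀M
  · intro q hq hne
    rw [mem_subM] at hq
    have hval : (q.1 : V) ≠ p₀.1 := fun e => hne (Subtype.ext e)
    have h1 : (q.1 : V) ≠ T.root := by
      intro e
      exact desc_ne_root hc1 q.1.2 e
    have hval2 : (q.2 : V') ≠ p₀.2 := by
      intro e
      exact hval ((hM.1 _ hq _ hp₀M).mpr e)
    have hpp := hM.2.2 _ hq h1
    rw [mem_subM]
    show (((T.sub p₀.1).par q.1 : V), ((T'.sub p₀.2).par q.2 : V')) ∈ M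
    have e1 : ((T.sub p₀.1).par q.1 : V) = T.par q.1 := by
      show ((subPar T p₀.1 q.1 : V)) = T.par q.1
      rw [subPar, dif_neg hval]
    have e2 : ((T'.sub p₀.2).par q.2 : V') = T'.par q.2 := by
      show ((subPar T' p₀.2 q.2 : V')) = T'.par q.2
      rw [subPar, dif_neg hval2]
    rw [e1, e2]
    exact hpp

end LTree

namespace LTree

variable {V V' : Type} {σ : Type} [Fintype V] [Fintype V']
  {T : LTree V σ} {T' : LTree V' σ} {M : Finset (V × V')}

theorem sub_label (T : LTree V σ) (v : V) (w : {w : V // T.Desc v w}) :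
    (T.sub v).label w = T.label w := rfl

/-- C1: the cost of the restricted mapping, expressed with sums over the
ambient vertex sets. -/
theorem IsSdM.subM_cost (γ : Option σ → Option σ → ℝ) (hM : IsSdM T T' M)
    {p₀ : V × V'} (hp₀ : p₀ ∈ childPairs T T' M) :
    cost γ (T.sub p₀.1) (T'.sub p₀.2) (subM T T' M p₀.1 p₀.2)
      = (∑ p ∈ M.filter (fun p => T.Desc p₀.1 p.1),
          γ (some (T.label p.1)) (some (T'.label p.2)))
        + (∑ w ∈ Finset.univ.filter (fun w => (∀ p ∈ M, p.1 ≠ w) ∧ T.Desc p₀.1 w),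
            γ (some (T.label w)) none)
        + (∑ w' ∈ Finset.univ.filter
            (fun w' => (∀ p ∈ M, p.2 ≠ w') ∧ T'.Desc p₀.2 w'),
            γ none (some (T'.label w'))) := by
  rw [cost]
  congr 1
  congr 1
  · -- matched pairs
    apply Finset.sum_bij (fun q (_ : q ∈ subM T T' M p₀.1 p₀.2) =>
      ((q.1 : V), (q.2 : V')))
    · intro q hq
      rw [mem_subM] at hq
      exact Finset.mem_filter.mpr ⟨hq, q.1.2⟩
    · intro a _ b _ e
      rw [Prod.mk.injEq] at e
      exact Prod.ext (Subtype.ext e.1) (Subtype.ext e.2)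
    · intro b hb
      obtain ⟨hbM, hbd⟩ := Finset.mem_filter.mp hb
      have hd2 := hM.desc_snd hp₀ hbM hbd
      exact ⟨(⟨b.1, hbd⟩, ⟨b.2, hd2⟩), mem_subM.mpr (by simpa using hbM), rfl⟩
    · intro a _
      rfl
  · -- deleted vertices
    refine Finset.sum_bij (fun (w : {w : V // T.Desc p₀.1 w}) _ => (w : V))
      ?_ ?_ ?_ ?_
    · intro w hw
      simp only [Finset.mem_filter, Finset.mem_univ, true_and] at hw ⊢
      refine ⟨?_, w.2⟩
      intro p hp e
      have hd1 : T.Desc p₀.1 p.1 := e ▸ w.2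
      have hd2 := hM.desc_snd hp₀ hp hd1
      exact hw (⟨p.1, hd1⟩, ⟨p.2, hd2⟩) (mem_subM.mpr (by simpa using hp))
        (Subtype.ext e)
    · intro a _ b _ e
      exact Subtype.ext e
    · intro b hb
      simp only [Finset.mem_filter, Finset.mem_univ, true_and] at hb
      obtain ⟨hun, hbd⟩ := hb
      refine ⟨⟨b, hbd⟩, ?_, rfl⟩
      simp only [Finset.mem_filter, Finset.mem_univ, true_and]
      intro q hq e
      rw [mem_subM] at hq
      exact hun _ hq (congrArg Subtype.val e)
    · intro a _
      rfl
  · -- inserted vertices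
    refine Finset.sum_bij (fun (w' : {w' : V' // T'.Desc p₀.2 w'}) _ => (w' : V'))
      ?_ ?_ ?_ ?_
    · intro w' hw'
      simp only [Finset.mem_filter, Finset.mem_univ, true_and] at hw' ⊢
      refine ⟨?_, w'.2⟩
      intro p hp e
      have hd2 : T'.Desc p₀.2 p.2 := e ▸ w'.2
      have hd1 := hM.desc_fst hp₀ hp hd2
      exact hw' (⟨p.1, hd1⟩, ⟨p.2, hd2⟩) (mem_subM.mpr (by simpa using hp))
        (Subtype.ext e)
    · intro a _ b _ e
      exact Subtype.ext e
    · intro b hb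
      simp only [Finset.mem_filter, Finset.mem_univ, true_and] at hb
      obtain ⟨hun, hbd⟩ := hb
      refine ⟨⟨b, hbd⟩, ?_, rfl⟩
      simp only [Finset.mem_filter, Finset.mem_univ, true_and]
      intro q hq e
      rw [mem_subM] at hq
      exact hun _ hq (congrArg Subtype.val e)
    · intro a _
      rfl

end LTree

namespace LTree

variable {V V' : Type} {σ : Type} [Fintype V] [Fintype V']
  {T : LTree V σ} {T' : LTree V' σ} {M : Finset (V × V')}

theorem IsSdM.sum_fst (hM : IsSdM T T' M) (A : V → ℝ) :
    ∑ u ∈ T.childs.filter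
        (fun u => ¬ ∀ p ∈ childPairs T T' M, p.1 ≠ u), A u
      = ∑ p ∈ childPairs T T' M, A p.1 := by
  refine (Finset.sum_bij (fun p (_ : p ∈ childPairs T T' M) => p.1)
    ?_ ?_ ?_ (fun _ _ => rfl)).symm
  · intro p hp
    simp only [Finset.mem_filter, not_forall]
    exact ⟨(Finset.mem_filter.mp hp).2.1, p, hp, by simp⟩
  · intro a ha b hb e
    have haM : a ∈ M := Finset.mem_filter.mp ha |>.1
    have hbM : b ∈ M := Finset.mem_filter.mp hb |>.1
    exact Prod.ext e ((hM.1 a haM b hbM).mp e)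
  · intro u hu
    simp only [Finset.mem_filter, not_forall] at hu
    obtain ⟨-, p, hp, e⟩ := hu
    exact ⟨p, hp, not_not.mp e⟩

theorem IsSdM.sum_snd (hM : IsSdM T T' M) (A : V' → ℝ) :
    ∑ u' ∈ T'.childs.filter
        (fun u' => ¬ ∀ p ∈ childPairs T T' M, p.2 ≠ u'), A u'
      = ∑ p ∈ childPairs T T' M, A p.2 := by
  refine (Finset.sum_bij (fun p (_ : p ∈ childPairs T T' M) => p.2)
    ?_ ?_ ?_ (fun _ _ => rfl)).symm
  · intro p hp
    simp only [Finset.mem_filter, not_forall]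
    exact ⟨(Finset.mem_filter.mp hp).2.2, p, hp, by simp⟩
  · intro a ha b hb e
    have haM : a ∈ M := Finset.mem_filter.mp ha |>.1
    have hbM : b ∈ M := Finset.mem_filter.mp hb |>.1
    exact Prod.ext ((hM.1 a haM b hbM).mpr e) e
  · intro u hu
    simp only [Finset.mem_filter, not_forall] at hu
    obtain ⟨-, p, hp, e⟩ := hu
    exact ⟨p, hp, not_not.mp e⟩

/-- The decomposition of the cost of an SdM along the child subtrees. -/
theorem IsSdM.cost_decomp (γ : Option σ → Option σ → ℝ) (hM : IsSdM T T' M) :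
    cost γ T T' M = γ (some (T.label T.root)) (some (T'.label T'.root))
      + (∑ p ∈ childPairs T T' M,
          cost γ (T.sub p.1) (T'.sub p.2) (subM T T' M p.1 p.2))
      + (∑ u ∈ T.childs.filter (fun u => ∀ p ∈ childPairs T T' M, p.1 ≠ u),
          delCost γ T u)
      + (∑ u' ∈ T'.childs.filter (fun u' => ∀ p ∈ childPairs T T' M, p.2 ≠ u'),
          insCost γ T' u') := by
  have hS1 : (∑ p ∈ M, γ (some (T.label p.1)) (some (T'.label p.2)))
      = γ (some (T.label T.root)) (some (T'.label T'.root))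
        + ∑ p ∈ childPairs T T' M, ∑ q ∈ M.filter (fun q => T.Desc p.1 q.1),
            γ (some (T.label q.1)) (some (T'.label q.2)) := by
    rw [sum_classify T M Prod.fst, hM.filter_fst_root, Finset.sum_singleton]
    congr 1
    rw [← Finset.sum_filter_add_sum_filter_not T.childs
      (fun u => ∀ p ∈ childPairs T T' M, p.1 ≠ u)]
    have hz : ∑ u ∈ T.childs.filter (fun u => ∀ p ∈ childPairs T T' M, p.1 ≠ u),
        (∑ q ∈ M.filter (fun q => T.Desc u q.1),
          γ (some (T.label q.1)) (some (T'.label q.2))) = 0 := by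
      apply Finset.sum_eq_zero
      intro u hu
      obtain ⟨hu1, hu2⟩ := Finset.mem_filter.mp hu
      rw [hM.filter_desc_empty hu1 hu2, Finset.sum_empty]
    rw [hz, zero_add, hM.sum_fst]
  have hS2 : (∑ w ∈ Finset.univ.filter (fun w : V => ∀ p ∈ M, p.1 ≠ w),
        γ (some (T.label w)) none)
      = (∑ p ∈ childPairs T T' M,
          ∑ w ∈ Finset.univ.filter
            (fun w => (∀ p ∈ M, p.1 ≠ w) ∧ T.Desc p.1 w),
          γ (some (T.label w)) none)
        + ∑ u ∈ T.childs.filter (fun u => ∀ p ∈ childPairs T T' M, p.1 ≠ u),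
            delCost γ T u := by
    rw [sum_classify T _ id]
    have h0 : (Finset.univ.filter (fun w : V => ∀ p ∈ M, p.1 ≠ w)).filter
        (fun w => id w = T.root) = ∅ := by
      rw [Finset.filter_eq_empty_iff]
      intro w hw e
      exact (Finset.mem_filter.mp hw).2 _ hM.2.1 (by simpa using e.symm)
    rw [h0, Finset.sum_empty, zero_add]
    have hff : ∀ u : V, ((Finset.univ.filter (fun w : V => ∀ p ∈ M, p.1 ≠ w)).filter
        (fun w => T.Desc u (id w)))
        = Finset.univ.filter (fun w => (∀ p ∈ M, p.1 ≠ w) ∧ T.Desc u w) := by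
      intro u
      rw [Finset.filter_filter]
      simp only [id_eq]
    simp only [hff]
    rw [← Finset.sum_filter_add_sum_filter_not T.childs
      (fun u => ∀ p ∈ childPairs T T' M, p.1 ≠ u), add_comm]
    congr 1
    · exact hM.sum_fst _
    · apply Finset.sum_congr rfl
      intro u hu
      obtain ⟨hu1, hu2⟩ := Finset.mem_filter.mp hu
      rw [delCost]
      apply Finset.sum_congr _ (fun _ _ => rfl)
      have hemp := hM.filter_desc_empty hu1 hu2
      rw [Finset.filter_eq_empty_iff] at hemp
      ext w
      simp only [Finset.mem_filter, Finset.mem_univ, true_and]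
      constructor
      · exact fun h => h.2
      · intro hd
        refine ⟨?_, hd⟩
        intro p hp e
        exact hemp hp (e ▸ hd)
  have hS3 : (∑ w' ∈ Finset.univ.filter (fun w' : V' => ∀ p ∈ M, p.2 ≠ w'),
        γ none (some (T'.label w')))
      = (∑ p ∈ childPairs T T' M,
          ∑ w' ∈ Finset.univ.filter
            (fun w' => (∀ p ∈ M, p.2 ≠ w') ∧ T'.Desc p.2 w'),
          γ none (some (T'.label w')))
        + ∑ u' ∈ T'.childs.filter (fun u' => ∀ p ∈ childPairs T T' M, p.2 ≠ u'),
            insCost γ T' u' := by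
    rw [sum_classify T' _ id]
    have h0 : (Finset.univ.filter (fun w' : V' => ∀ p ∈ M, p.2 ≠ w')).filter
        (fun w' => id w' = T'.root) = ∅ := by
      rw [Finset.filter_eq_empty_iff]
      intro w hw e
      exact (Finset.mem_filter.mp hw).2 _ hM.2.1 (by simpa using e.symm)
    rw [h0, Finset.sum_empty, zero_add]
    have hff : ∀ u' : V', ((Finset.univ.filter
        (fun w' : V' => ∀ p ∈ M, p.2 ≠ w')).filter
        (fun w' => T'.Desc u' (id w')))
        = Finset.univ.filter (fun w' => (∀ p ∈ M, p.2 ≠ w') ∧ T'.Desc u' w') := by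
      intro u'
      rw [Finset.filter_filter]
      simp only [id_eq]
    simp only [hff]
    rw [← Finset.sum_filter_add_sum_filter_not T'.childs
      (fun u' => ∀ p ∈ childPairs T T' M, p.2 ≠ u'), add_comm]
    congr 1
    · exact hM.sum_snd _
    · apply Finset.sum_congr rfl
      intro u' hu'
      obtain ⟨hu1, hu2⟩ := Finset.mem_filter.mp hu'
      rw [insCost]
      apply Finset.sum_congr _ (fun _ _ => rfl)
      have hemp := hM.filter_desc_empty' hu1 hu2
      rw [Finset.filter_eq_empty_iff] at hemp
      ext w'
      simp only [Finset.mem_filter, Finset.mem_univ, true_and]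
      constructor
      · exact fun h => h.2
      · intro hd
        refine ⟨?_, hd⟩
        intro p hp e
        exact hemp hp (e ▸ hd)
  have hsub : ∑ p ∈ childPairs T T' M,
      cost γ (T.sub p.1) (T'.sub p.2) (subM T T' M p.1 p.2)
      = (∑ p ∈ childPairs T T' M, ∑ q ∈ M.filter (fun q => T.Desc p.1 q.1),
          γ (some (T.label q.1)) (some (T'.label q.2)))
        + (∑ p ∈ childPairs T T' M, ∑ w ∈ Finset.univ.filter
            (fun w => (∀ p ∈ M, p.1 ≠ w) ∧ T.Desc p.1 w),
            γ (some (T.label w)) none)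
        + (∑ p ∈ childPairs T T' M, ∑ w' ∈ Finset.univ.filter
            (fun w' => (∀ p ∈ M, p.2 ≠ w') ∧ T'.Desc p.2 w'),
            γ none (some (T'.label w'))) := by
    rw [← Finset.sum_add_distrib, ← Finset.sum_add_distrib]
    apply Finset.sum_congr rfl
    intro p hp
    exact hM.subM_cost γ hp
  rw [cost, hS1, hS2, hS3, hsub]
  ring

end LTree

namespace LTree

variable {V V' : Type} {σ : Type} [Fintype V] [Fintype V']

theorem sdm_singleton (T : LTree V σ) (T' : LTree V' σ) :
    IsSdM T T' {(T.root, T'.root)} := by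
  refine ⟨?_, Finset.mem_singleton_self _, ?_⟩
  · intro p hp q hq
    rw [Finset.mem_singleton] at hp hq
    subst hp; subst hq
    simp
  · intro p hp h1
    rw [Finset.mem_singleton] at hp
    exact absurd (congrArg Prod.fst hp) h1

theorem sdted_spec (γ : Option σ → Option σ → ℝ) (T : LTree V σ) (T' : LTree V' σ) :
    (∃ M, IsSdM T T' M ∧ cost γ T T' M = SdTed γ T T') ∧
    (∀ M, IsSdM T T' M → SdTed γ T T' ≤ cost γ T T' M) := by
  have hfin : {c : ℝ | ∃ M, IsSdM T T' M ∧ cost γ T T' M = c}.Finite := by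
    apply Set.Finite.subset (Set.finite_range (cost γ T T'))
    rintro c ⟨M, -, rfl⟩
    exact ⟨M, rfl⟩
  have hne : {c : ℝ | ∃ M, IsSdM T T' M ∧ cost γ T T' M = c}.Nonempty :=
    ⟨_, {(T.root, T'.root)}, sdm_singleton T T', rfl⟩
  constructor
  · obtain ⟨M, hM, hc⟩ := hne.csInf_mem hfin
    exact ⟨M, hM, hc⟩
  · intro M hM
    exact csInf_le hfin.bddBelow ⟨M, hM, rfl⟩

end LTree

namespace LTree

variable {V V' : Type} {σ : Type} [Fintype V] [Fintype V']

/-- Given a partial matching `P` of the children, there is an SdM realizing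
the corresponding cost. -/
theorem exists_realizing (γ : Option σ → Option σ → ℝ) (T : LTree V σ)
    (T' : LTree V' σ) (P : Finset (V × V'))
    (hP1 : ∀ p ∈ P, p.1 ∈ T.childs ∧ p.2 ∈ T'.childs)
    (hP2 : ∀ p ∈ P, ∀ q ∈ P, (p.1 = q.1 ↔ p.2 = q.2)) :
    ∃ M, IsSdM T T' M ∧ cost γ T T' M
      = γ (some (T.label T.root)) (some (T'.label T'.root))
        + ((∑ p ∈ P, SdTed γ (T.sub p.1) (T'.sub p.2))
          + (∑ u ∈ T.childs.filter (fun u => ∀ p ∈ P, p.1 ≠ u), delCost γ T u)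
          + (∑ u' ∈ T'.childs.filter (fun u' => ∀ p ∈ P, p.2 ≠ u'),
              insCost γ T' u')) := by
  classical
  have hopt : ∀ p : {p : V × V' // p ∈ P},
      ∃ Mp : Finset ({w : V // T.Desc (p : V × V').1 w}
        × {w' : V' // T'.Desc (p : V × V').2 w'}),
      IsSdM (T.sub (p : V × V').1) (T'.sub (p : V × V').2) Mp ∧
      cost γ (T.sub (p : V × V').1) (T'.sub (p : V × V').2) Mp
        = SdTed γ (T.sub (p : V × V').1) (T'.sub (p : V × V').2) :=
    fun p => (sdted_spec γ _ _).1
  choose Mp hMp1 hMp2 using hopt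
  set Mbig : Finset (V × V') :=
    insert (T.root, T'.root) (P.attach.biUnion
      (fun p => (Mp p).image (fun q => ((q.1 : V), (q.2 : V'))))) with hMbig
  have hmem : ∀ x : V × V', x ∈ Mbig ↔ x = (T.root, T'.root) ∨
      ∃ p : {p : V × V' // p ∈ P}, ∃ q ∈ Mp p, ((q.1 : V), (q.2 : V')) = x := by
    intro x
    rw [hMbig, Finset.mem_insert, Finset.mem_biUnion]
    apply or_congr Iff.rfl
    constructor
    · rintro ⟨p, -, hx⟩
      rw [Finset.mem_image] at hx
      obtain ⟨q, hq, e⟩ := hx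
      exact ⟨p, q, hq, e⟩
    · rintro ⟨p, q, hq, e⟩
      exact ⟨p, Finset.mem_attach _ _, Finset.mem_image.mpr ⟨q, hq, e⟩⟩
  have hc1 : ∀ p : {p : V × V' // p ∈ P}, (p : V × V').1 ∈ T.childs :=
    fun p => (hP1 _ p.2).1
  have hc2 : ∀ p : {p : V × V' // p ∈ P}, (p : V × V').2 ∈ T'.childs :=
    fun p => (hP1 _ p.2).2
  have huniq1 : ∀ (p p' : {p : V × V' // p ∈ P}) (w : V),
      T.Desc (p : V × V').1 w → T.Desc (p' : V × V').1 w → p = p' := by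
    intro p p' w h h'
    have h1 : (p : V × V').1 = (p' : V × V').1 :=
      child_desc_unique (hc1 p) (hc1 p') h h'
    exact Subtype.ext (Prod.ext h1 ((hP2 _ p.2 _ p'.2).mp h1))
  have huniq2 : ∀ (p p' : {p : V × V' // p ∈ P}) (w' : V'),
      T'.Desc (p : V × V').2 w' → T'.Desc (p' : V × V').2 w' → p = p' := by
    intro p p' w' h h'
    have h2 : (p : V × V').2 = (p' : V × V').2 :=
      child_desc_unique (hc2 p) (hc2 p') h h'
    exact Subtype.ext (Prod.ext ((hP2 _ p.2 _ p'.2).mpr h2) h2)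
  have hSdM : IsSdM T T' Mbig := by
    refine ⟨?_, (hmem _).mpr (Or.inl rfl), ?_⟩
    · intro x hx y hy
      rw [hmem] at hx hy
      rcases hx with rfl | ⟨p, q, hq, rfl⟩ <;> rcases hy with rfl | ⟨p', q', hq', rfl⟩
      · simp
      · exact iff_of_false (fun e => desc_ne_root (hc1 p') q'.1.2 e.symm)
          (fun e => desc_ne_root (hc2 p') q'.2.2 e.symm)
      · exact iff_of_false (fun e => desc_ne_root (hc1 p) q.1.2 e)
          (fun e => desc_ne_root (hc2 p) q.2.2 e)
      · constructor
        · intro e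
          have e' : (q.1 : V) = (q'.1 : V) := e
          have hd' : T.Desc (p' : V × V').1 (q.1 : V) := by
            rw [e']; exact q'.1.2
          obtain rfl : p = p' := huniq1 p p' _ q.1.2 hd'
          exact congrArg Subtype.val
            (((hMp1 p).1 q hq q' hq').mp (Subtype.ext e'))
        · intro e
          have e' : (q.2 : V') = (q'.2 : V') := e
          have hd' : T'.Desc (p' : V × V').2 (q.2 : V') := by
            rw [e']; exact q'.2.2
          obtain rfl : p = p' := huniq2 p p' _ q.2.2 hd'
          exact congrArg Subtype.val
            (((hMp1 p).1 q hq q' hq').mpr (Subtype.ext e'))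
    · intro x hx h1
      rw [hmem] at hx
      rcases hx with rfl | ⟨p, q, hq, rfl⟩
      · exact absurd rfl h1
      · by_cases hq1 : (q.1 : V) = (p : V × V').1
        · have hq2 : (q.2 : V') = (p : V × V').2 := by
            have := ((hMp1 p).1 q hq _ (hMp1 p).2.1).mp (Subtype.ext hq1)
            exact congrArg Subtype.val this
          rw [hmem]
          left
          have e1 : T.par (q.1 : V) = T.root := by
            rw [hq1]; exact (mem_childs_iff.mp (hc1 p)).1
          have e2 : T'.par (q.2 : V') = T'.root := by
            rw [hq2]; exact (mem_childs_iff.mp (hc2 p)).1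
          exact Prod.ext e1 e2
        · have hq2 : (q.2 : V') ≠ (p : V × V').2 := by
            intro e
            exact hq1 (congrArg Subtype.val
              (((hMp1 p).1 q hq _ (hMp1 p).2.1).mpr (Subtype.ext e)))
          have hstep := (hMp1 p).2.2 q hq
            (fun e => hq1 (congrArg Subtype.val e))
          rw [hmem]
          right
          refine ⟨p, _, hstep, ?_⟩
          show ((subPar T _ q.1 : V), (subPar T' _ q.2 : V'))
            = (T.par (q.1 : V), T'.par (q.2 : V'))
          rw [subPar, subPar, dif_neg hq1, dif_neg hq2]
  have hCP : childPairs T T' Mbig = P := by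
    ext x
    simp only [childPairs, Finset.mem_filter]
    constructor
    · rintro ⟨hx, hx1, hx2⟩
      rw [hmem] at hx
      rcases hx with rfl | ⟨p, q, hq, rfl⟩
      · exact absurd rfl (mem_childs_iff.mp hx1).2
      · have e1 : (q.1 : V) = (p : V × V').1 :=
          (anc_child hx1).symm.trans (desc_child_eq_anc (hc1 p) q.1.2)
        have e2 : (q.2 : V') = (p : V × V').2 :=
          (anc_child hx2).symm.trans (desc_child_eq_anc (hc2 p) q.2.2)
        rw [show ((q.1 : V), (q.2 : V')) = (p : V × V') from Prod.ext e1 e2]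
        exact p.2
    · intro hx
      refine ⟨?_, (hP1 x hx).1, (hP1 x hx).2⟩
      rw [hmem]
      right
      exact ⟨⟨x, hx⟩, _, (hMp1 ⟨x, hx⟩).2.1, rfl⟩
  have hsubM : ∀ (p : V × V') (hp : p ∈ P),
      subM T T' Mbig p.1 p.2 = Mp ⟨p, hp⟩ := by
    intro p hp
    ext q
    rw [mem_subM, hmem]
    constructor
    · rintro (e | ⟨p', q', hq', e⟩)
      · exact absurd (congrArg Prod.fst e) (desc_ne_root (hP1 p hp).1 q.1.2)
      · have e1 : (q'.1 : V) = (q.1 : V) := congrArg Prod.fst e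
        have e2 : (q'.2 : V') = (q.2 : V') := congrArg Prod.snd e
        have hd : T.Desc ((⟨p, hp⟩ : {p : V × V' // p ∈ P}) : V × V').1 (q'.1 : V) := by
          show T.Desc p.1 (q'.1 : V)
          rw [e1]
          exact q.1.2
        obtain rfl : p' = (⟨p, hp⟩ : {p : V × V' // p ∈ P}) :=
          huniq1 p' ⟨p, hp⟩ _ q'.1.2 hd
        have eq : q' = q := Prod.ext (Subtype.ext e1) (Subtype.ext e2)
        rw [← eq]
        exact hq'
    · intro hq
      exact Or.inr ⟨⟨p, hp⟩, q, hq, rfl⟩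
  refine ⟨Mbig, hSdM, ?_⟩
  rw [hSdM.cost_decomp γ, hCP]
  have hsum : ∑ p ∈ P, cost γ (T.sub p.1) (T'.sub p.2) (subM T T' Mbig p.1 p.2)
      = ∑ p ∈ P, SdTed γ (T.sub p.1) (T'.sub p.2) :=
    Finset.sum_congr rfl (fun p hp => by rw [hsubM p hp]; exact hMp2 ⟨p, hp⟩)
  rw [hsum]
  ring

end LTree

open LTree

/-- The recursion computed by Algorithm 1 (Compute SdTed) is
correct: for all rooted labeled trees `T, T'` and every metric cost function
`γ`, `SdTed(T, T')` equals the distance `γ(ℓ(r(T)), ℓ(r(T')))` between the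
root labels plus the minimum cost of a perfect bipartite matching between the
child subtrees of `r(T)` and those of `r(T')`, both padded with empty trees.
A perfect matching on the padded sets is encoded as a partial matching `P`
between the children themselves; a pair `(Tᵢ, Tⱼ')` matched by `P` contributes
`SdTed(Tᵢ, Tⱼ')`, a child subtree matched to an empty tree contributes its
total deletion (resp. insertion) cost, and matched empty trees contribute 0. -/
theorem sdted_recursion {σ : Type} (γ : Option σ → Option σ → ℝ)
    (hγ : IsMetricCost γ) {V V' : Type} [Fintype V] [Fintype V']
    (T : LTree V σ) (T' : LTree V' σ) :
    SdTed γ T T' =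
      γ (some (T.label T.root)) (some (T'.label T'.root)) +
      sInf {c : ℝ | ∃ P : Finset (V × V'),
        (∀ p ∈ P, p.1 ∈ T.childs ∧ p.2 ∈ T'.childs) ∧
        (∀ p ∈ P, ∀ q ∈ P, (p.1 = q.1 ↔ p.2 = q.2)) ∧
        c = (∑ p ∈ P, SdTed γ (T.sub p.1) (T'.sub p.2))
          + (∑ u ∈ T.childs.filter (fun u => ∀ p ∈ P, p.1 ≠ u), delCost γ T u)
          + (∑ u' ∈ T'.childs.filter (fun u' => ∀ p ∈ P, p.2 ≠ u'),
              insCost γ T' u')} := by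
  classical
  set SR : Set ℝ := {c : ℝ | ∃ P : Finset (V × V'),
    (∀ p ∈ P, p.1 ∈ T.childs ∧ p.2 ∈ T'.childs) ∧
    (∀ p ∈ P, ∀ q ∈ P, (p.1 = q.1 ↔ p.2 = q.2)) ∧
    c = (∑ p ∈ P, SdTed γ (T.sub p.1) (T'.sub p.2))
      + (∑ u ∈ T.childs.filter (fun u => ∀ p ∈ P, p.1 ≠ u), delCost γ T u)
      + (∑ u' ∈ T'.childs.filter (fun u' => ∀ p ∈ P, p.2 ≠ u'),
          insCost γ T' u')} with hSR
  have hfinR : SR.Finite := by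
    rw [hSR]
    apply Set.Finite.subset (Set.finite_range (fun P : Finset (V × V') =>
      (∑ p ∈ P, SdTed γ (T.sub p.1) (T'.sub p.2))
      + (∑ u ∈ T.childs.filter (fun u => ∀ p ∈ P, p.1 ≠ u), delCost γ T u)
      + (∑ u' ∈ T'.childs.filter (fun u' => ∀ p ∈ P, p.2 ≠ u'),
          insCost γ T' u')))
    rintro c ⟨P, -, -, hc⟩
    exact ⟨P, hc.symm⟩
  have hneR : SR.Nonempty := by
    rw [hSR]
    exact ⟨_, ∅, by simp, by simp, rfl⟩
  apply le_antisymm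
  · have hmm := hneR.csInf_mem hfinR
    rw [hSR] at hmm
    obtain ⟨P, hP1, hP2, hval⟩ := hmm
    obtain ⟨M, hM, hcost⟩ := exists_realizing γ T T' P hP1 hP2
    have hle := (sdted_spec γ T T').2 M hM
    rw [hcost] at hle
    linarith
  · obtain ⟨M, hM, hc⟩ := (sdted_spec γ T T').1
    have hdec := hM.cost_decomp γ
    have hsumle : ∑ p ∈ childPairs T T' M, SdTed γ (T.sub p.1) (T'.sub p.2)
        ≤ ∑ p ∈ childPairs T T' M,
            cost γ (T.sub p.1) (T'.sub p.2) (subM T T' M p.1 p.2) :=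
      Finset.sum_le_sum (fun p hp => (sdted_spec γ _ _).2 _ (hM.subM_isSdM hp))
    have hmemR : ((∑ p ∈ childPairs T T' M, SdTed γ (T.sub p.1) (T'.sub p.2))
        + (∑ u ∈ T.childs.filter (fun u => ∀ p ∈ childPairs T T' M, p.1 ≠ u),
            delCost γ T u)
        + (∑ u' ∈ T'.childs.filter (fun u' => ∀ p ∈ childPairs T T' M, p.2 ≠ u'),
            insCost γ T' u')) ∈ SR := by
      rw [hSR]
      refine ⟨childPairs T T' M, ?_, ?_, rfl⟩
      · intro p hp
        exact ⟨(Finset.mem_filter.mp hp).2.1, (Finset.mem_filter.mp hp).2.2⟩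
      · intro p hp q hq
        exact hM.1 p (Finset.mem_filter.mp hp).1 q (Finset.mem_filter.mp hq).1
    have hinf := csInf_le hfinR.bddBelow hmemR
    rw [← hc, hdec]
    linarith
end

section
/- The relaxed Weisfeiler-Lehman subtree kernel generalizes the Weisfeiler-Lehman subtree kernel: let 𝒢 be a set of finite labeled graphs and h ∈ ℕ, and suppose for each i ∈ {0, ..., h} that Θ_i = {ρ_i} is a singleton where ρ_i : 𝒯^{(i)} → [k_i] satisfies ρ_i(T) = ρ_i(T') if and only if T and T' are isomorphic (equivalently, SdTed(T, T') = 0). Then for all G, G' ∈ 𝒢, k^h_{R-WL}(G, G') = k^h_{WL}(G, G'), where k^h_{WL}(G, G') = Σ_{i=0}^{h} Σ_{v ∈ V(G)} Σ_{v' ∈ V(G')} δ(ℓ_i(v), ℓ_i(v')) is the Weisfeiler-Lehman subtree kernel computed with Weisfeiler-Lehman labels ℓ_i obtained from an injective hash function. -/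
open scoped Classical

/-- A finite undirected labeled graph: vertices `Fin n`, a symmetric
irreflexive neighborhood relation given by `nbr`, and a vertex labeling
with values in `σ`. -/
structure LGraph (σ : Type) where
  n : ℕ
  nbr : Fin n → Finset (Fin n)
  symm : ∀ u v, u ∈ nbr v → v ∈ nbr u
  irrefl : ∀ v, v ∉ nbr v
  label : Fin n → σ

/-- The type of isomorphism classes of depth-`i` unfolding trees over label
alphabet `σ`: a depth-0 unfolding tree is just a root label, and a
depth-`(i+1)` unfolding tree is a root label together with the multiset of
its depth-`i` child subtrees. (Using multisets of children makes equality in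
`UT σ i` coincide with isomorphism of rooted labeled trees.) -/
def UT (σ : Type) : ℕ → Type
  | 0 => σ
  | (i + 1) => σ × Multiset (UT σ i)

/-- The depth-`i` unfolding tree `T^i(G, v)` of the graph `G` at vertex `v`
(as an isomorphism class): the root is labeled `ℓ₀(v)` and its child subtrees
are the depth-`(i-1)` unfolding trees at the neighbors of `v`. -/
def utree {σ : Type} (G : LGraph σ) : (i : ℕ) → Fin G.n → UT σ i
  | 0, v => G.label v
  | (i + 1), v => (G.label v, (G.nbr v).val.map (utree G i))

/-- The Weisfeiler-Lehman labels of a graph `G` whose vertices are initially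
labeled over `Λ 0`, computed with hash functions `hash i` mapping the pair of
a vertex's current label and the multiset of its neighbors' current labels to
a new label in `Λ (i+1)`. -/
def wl {Λ : ℕ → Type} (hash : ∀ i, Λ i → Multiset (Λ i) → Λ (i + 1))
    (G : LGraph (Λ 0)) : (i : ℕ) → Fin G.n → Λ i
  | 0 => G.label
  | (i + 1) => fun v => hash i (wl hash G i v) ((G.nbr v).val.map (wl hash G i))

/-- The relaxed Weisfeiler-Lehman subtree kernel of depth `h` with respect to
families `Θ i` of hard clustering functions on (isomorphism classes of)
depth-`i` unfolding trees:
`k(G, G') = ∑_{i ≤ h} ∑_{ρ ∈ Θ i} ∑_{v} ∑_{v'} δ(ρ(T^i(G,v)), ρ(T^i(G',v')))`. -/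
noncomputable def kRWL {σ : Type} (h : ℕ) (Θ : (i : ℕ) → Finset (UT σ i → ℕ))
    (G G' : LGraph σ) : ℝ :=
  ∑ i ∈ Finset.range (h + 1), ∑ ρ ∈ Θ i,
    ∑ v : Fin G.n, ∑ v' : Fin G'.n,
      if ρ (utree G i v) = ρ (utree G' i v') then 1 else 0

/-!
The depth-`i` WL label of a vertex is a function `wlLabel` of its depth-`i` unfolding tree: hash
the label of the tree truncated by one level with the multiset of labels of the child subtrees.
An injective hash makes `wlLabel` injective, so `δ(ℓᵢ(v), ℓᵢ(v'))` and
`δ(ρᵢ(Tⁱ(G, v)), ρᵢ(Tⁱ(G', v')))` both test whether the unfolding trees at `v` and `v'` agree.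
-/

def truncUT {σ : Type} : {i : ℕ} → UT σ (i + 1) → UT σ i
  | 0, t => t.1
  | (_ + 1), t => (t.1, t.2.map truncUT)

lemma fst_eq_of_truncUT_eq {σ : Type} {i : ℕ} {t t' : UT σ (i + 1)}
    (h : truncUT t = truncUT t') : t.1 = t'.1 := by
  cases i
  · exact h
  · exact (Prod.mk.inj h).1

lemma truncUT_utree {σ : Type} (G : LGraph σ) (i : ℕ) (v : Fin G.n) :
    truncUT (utree G (i + 1) v) = utree G i v := by
  induction i generalizing v with
  | zero => rfl
  | succ i ih =>
    simp only [utree, truncUT]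
    exact congrArg _ ((Multiset.map_map _ _ _).trans (Multiset.map_congr rfl fun u _ => ih u))

def wlLabel {Λ : ℕ → Type} (hash : ∀ i, Λ i → Multiset (Λ i) → Λ (i + 1)) :
    (i : ℕ) → UT (Λ 0) i → Λ i
  | 0 => id
  | (i + 1) => fun t => hash i (wlLabel hash i (truncUT t)) (t.2.map (wlLabel hash i))

section

variable {Λ : ℕ → Type} {hash : ∀ i, Λ i → Multiset (Λ i) → Λ (i + 1)}

lemma wl_eq_wlLabel_utree (G : LGraph (Λ 0)) (i : ℕ) (v : Fin G.n) :
    wl hash G i v = wlLabel hash i (utree G i v) := by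
  induction i generalizing v with
  | zero => rfl
  | succ i ih =>
    change hash i (wl hash G i v) ((G.nbr v).val.map (wl hash G i)) =
      hash i (wlLabel hash i (truncUT (utree G (i + 1) v)))
        (((G.nbr v).val.map (utree G i)).map (wlLabel hash i))
    rw [truncUT_utree, Multiset.map_map, ih]
    exact congrArg _ (Multiset.map_congr rfl fun u _ => ih u)

lemma wlLabel_injective (hinj : ∀ i, Function.Injective2 (hash i)) (i : ℕ) :
    Function.Injective (wlLabel hash i) := by
  induction i with
  | zero => exact Function.injective_id
  | succ i ih =>
    intro t t' heq
    obtain ⟨htrunc, hchildren⟩ := hinj i heq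
    exact Prod.ext (fst_eq_of_truncUT_eq (ih htrunc)) (Multiset.map_injective ih hchildren)

lemma wl_eq_wl_iff_utree_eq (hinj : ∀ i, Function.Injective2 (hash i))
    (G G' : LGraph (Λ 0)) (v : Fin G.n) (v' : Fin G'.n) (i : ℕ) :
    wl hash G i v = wl hash G' i v' ↔ utree G i v = utree G' i v' := by
  rw [wl_eq_wlLabel_utree, wl_eq_wlLabel_utree]
  exact (wlLabel_injective hinj i).eq_iff

end

/-- The relaxed Weisfeiler-Lehman subtree kernel generalizes
the Weisfeiler-Lehman subtree kernel: let `𝒢` be a set of graphs and suppose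
that for each `i ≤ h` the family `Θ i` is the singleton `{ρ i}`, where the
hard clustering function `ρ i` satisfies `ρ i T = ρ i T'` iff the unfolding
trees `T, T'` of `𝒢` are isomorphic (i.e. equal as elements of `UT (Λ 0) i`).
Then for all `G, G' ∈ 𝒢` the relaxed kernel coincides with the
Weisfeiler-Lehman subtree kernel
`k^h_{WL}(G, G') = ∑_{i ≤ h} ∑_v ∑_{v'} δ(ℓᵢ(v), ℓᵢ(v'))`
computed with WL labels `ℓᵢ` obtained from injective hash functions. -/
theorem kRWL_generalizes_kWL {Λ : ℕ → Type}
    (hash : ∀ i, Λ i → Multiset (Λ i) → Λ (i + 1))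
    (hinj : ∀ i a₁ m₁ a₂ m₂, hash i a₁ m₁ = hash i a₂ m₂ → a₁ = a₂ ∧ m₁ = m₂)
    (h : ℕ) (𝒢 : Set (LGraph (Λ 0))) (ρ : (i : ℕ) → UT (Λ 0) i → ℕ)
    (hρ : ∀ i ≤ h, ∀ H ∈ 𝒢, ∀ H' ∈ 𝒢, ∀ (w : Fin H.n) (w' : Fin H'.n),
      ρ i (utree H i w) = ρ i (utree H' i w') ↔ utree H i w = utree H' i w')
    (G G' : LGraph (Λ 0)) (hG : G ∈ 𝒢) (hG' : G' ∈ 𝒢) :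
    kRWL h (fun i => {ρ i}) G G' =
      ∑ i ∈ Finset.range (h + 1), ∑ v : Fin G.n, ∑ v' : Fin G'.n,
        if wl hash G i v = wl hash G' i v' then (1 : ℝ) else 0 := by
  have hinj₂ : ∀ i, Function.Injective2 (hash i) := fun i _ _ _ _ => hinj i _ _ _ _
  unfold kRWL
  refine Finset.sum_congr rfl fun i hi => ?_
  have hih : i ≤ h := Finset.mem_range_succ_iff.mp hi
  rw [Finset.sum_singleton]
  refine Finset.sum_congr rfl fun v _ => Finset.sum_congr rfl fun v' _ => ?_
  simp only [hρ i hih G hG G' hG' v v', wl_eq_wl_iff_utree_eq hinj₂]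
end
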